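/- Let μ > 1/2, t > 0, and define J_μ(-x²) = (1/κ_μ) ∫_{-1}^1 e^{2vx}(1-v²)^{μ-3/2} dv for x ≥ 0, with κ_μ = ∫_{-1}^1 (1-v²)^{μ-3/2} dv (so J_μ(-x²) is the analytic continuation of the Bessel function to negative argument). Then there is a constant C > 0 such that for all μ > 3 and x ≥ 0: J_μ(-(μ - 3/2) x²) ≤ e^{x²}·(1 + C/μ). -/

import Mathlib

/-- The normalization constant `κ_μ = ∫_{-1}^1 (1 - v²)^{μ - 3/2} dv`. -/
noncomputable def kappaConst (μ : ℝ) : ℝ :=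
  ∫ v in (-1 : ℝ)..1, (1 - v ^ 2) ^ (μ - 3 / 2)

/-- The analytic continuation of the one-dimensional Bessel function to negative
arguments: `J_μ(-x²) = (1/κ_μ) ∫_{-1}^1 e^{2vx}(1-v²)^{μ-3/2} dv`. -/
noncomputable def besselJNeg (μ x : ℝ) : ℝ :=
  (1 / kappaConst μ) * ∫ v in (-1 : ℝ)..1, Real.exp (2 * v * x) * (1 - v ^ 2) ^ (μ - 3 / 2)

open Real MeasureTheory Filter Set Topology

/-- Continuity of the weight `v ↦ (1-v²)^m`. -/
lemma rpow_base_cont {m : ℝ} (hm : 0 ≤ m) : Continuous fun v : ℝ => (1 - v ^ 2) ^ m := by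
  rw [continuous_iff_continuousAt]
  intro v
  exact (Real.continuousAt_rpow_const _ _ (Or.inr hm)).comp (by fun_prop)

lemma pw_upper {m : ℝ} (hm : 0 ≤ m) {v : ℝ} (hv : v ^ 2 ≤ 1) :
    (1 - v ^ 2) ^ m ≤ Real.exp (-m * v ^ 2) := by
  have h0 : (0:ℝ) ≤ 1 - v ^ 2 := by linarith
  have h1 : 1 - v ^ 2 ≤ Real.exp (-v ^ 2) := by
    have := Real.add_one_le_exp (-v ^ 2); linarith
  calc (1 - v ^ 2) ^ m ≤ (Real.exp (-v ^ 2)) ^ m := Real.rpow_le_rpow h0 h1 hm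
    _ = Real.exp (-m * v ^ 2) := by rw [← Real.exp_mul]; congr 1; ring

lemma pw_lower {m : ℝ} (hm : 1 ≤ m) {v : ℝ} (hv : v ^ 2 ≤ 1) :
    Real.exp (-m * v ^ 2) - m * (v ^ 4 * Real.exp (-m * v ^ 2)) ≤ (1 - v ^ 2) ^ m := by
  have hm0 : (0:ℝ) ≤ m := by linarith
  set t := v ^ 2 with ht
  have ht0 : 0 ≤ t := sq_nonneg v
  have h1 : 1 - m * t ^ 2 ≤ (1 - t ^ 2) ^ m := by
    have h := one_add_mul_self_le_rpow_one_add (s := -t ^ 2) (by nlinarith) hm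
    have e1 : 1 + m * -t ^ 2 = 1 - m * t ^ 2 := by ring
    have e2 : 1 + -t ^ 2 = 1 - t ^ 2 := by ring
    rw [e1, e2] at h
    exact h
  have h2 : (1 - t ^ 2) ^ m ≤ ((1 - t) * Real.exp t) ^ m := by
    apply Real.rpow_le_rpow (by nlinarith) _ hm0
    have := Real.add_one_le_exp t
    nlinarith
  have h3 : ((1 - t) * Real.exp t) ^ m = (1 - t) ^ m * Real.exp (t * m) := by
    rw [Real.mul_rpow (by linarith) (Real.exp_pos t).le, ← Real.exp_mul]
  have h4 : 1 - m * t ^ 2 ≤ (1 - t) ^ m * Real.exp (t * m) := le_of_le_of_eq (h1.trans h2) h3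
  have h5 := mul_le_mul_of_nonneg_left h4 (Real.exp_pos (-(t * m))).le
  have h6 : Real.exp (-(t * m)) * ((1 - t) ^ m * Real.exp (t * m)) = (1 - t) ^ m := by
    rw [mul_comm, mul_assoc, ← Real.exp_add]
    simp
  rw [h6] at h5
  have h7 : Real.exp (-m * t) - m * (v ^ 4 * Real.exp (-m * t))
      = Real.exp (-(t * m)) * (1 - m * t ^ 2) := by
    rw [show v ^ 4 = t ^ 2 by rw [ht]; ring, show -m * t = -(t * m) by ring]
    ring
  rw [h7]
  exact h5

lemma integrable_gauss_linear {m : ℝ} (hm : 0 < m) (c : ℝ) :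
    Integrable fun v : ℝ => Real.exp (2 * v * c - m * v ^ 2) := by
  have h : ∀ v : ℝ, Real.exp (2 * v * c - m * v ^ 2)
      = Real.exp (c ^ 2 / m) * Real.exp (-m * (v - c / m) ^ 2) := by
    intro v
    rw [← Real.exp_add]
    congr 1
    field_simp
    ring
  simp_rw [h]
  exact ((integrable_exp_neg_mul_sq hm).comp_sub_right (c / m)).const_mul _

lemma integral_gauss_linear {m : ℝ} (hm : 0 < m) (c : ℝ) :
    ∫ v : ℝ, Real.exp (2 * v * c - m * v ^ 2) = Real.sqrt (π / m) * Real.exp (c ^ 2 / m) := by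
  have h : ∀ v : ℝ, Real.exp (2 * v * c - m * v ^ 2)
      = Real.exp (c ^ 2 / m) * Real.exp (-m * (v - c / m) ^ 2) := by
    intro v
    rw [← Real.exp_add]
    congr 1
    field_simp
    ring
  simp_rw [h]
  rw [integral_const_mul,
    integral_sub_right_eq_self (fun v : ℝ => Real.exp (-m * v ^ 2)) (c / m),
    integral_gaussian, mul_comm]

lemma tendsto_pow_gauss {m : ℝ} (hm : 0 < m) (k : ℕ) :
    Tendsto (fun v : ℝ => v ^ k * Real.exp (-m * v ^ 2)) atTop (𝓝 0) := by
  have ht : Tendsto (fun x : ℝ => Real.exp (-(1/2) * x)) atTop (𝓝 0) := by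
    have h1 : Tendsto (fun x : ℝ => -(1/2) * x) atTop atBot := by
      apply Filter.Tendsto.const_mul_atTop_of_neg (by norm_num : (-(1/2) : ℝ) < 0) tendsto_id
    exact Real.tendsto_exp_atBot.comp h1
  have h := (rpow_mul_exp_neg_mul_sq_isLittleO_exp_neg hm (k : ℝ)).isBigO.trans_tendsto ht
  have heq : (fun v : ℝ => v ^ (k : ℝ) * Real.exp (-m * v ^ 2))
      = fun v : ℝ => v ^ k * Real.exp (-m * v ^ 2) := by
    funext v
    rw [Real.rpow_natCast]
  rwa [heq] at h

lemma tendsto_F_top {m : ℝ} (hm : 0 < m) (a b : ℝ) :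
    Tendsto (fun v : ℝ => (a * v ^ 3 + b * v) * Real.exp (-m * v ^ 2)) atTop (𝓝 0) := by
  have h3 := (tendsto_pow_gauss hm 3).const_mul a
  have h1 := (tendsto_pow_gauss hm 1).const_mul b
  have h := h3.add h1
  simp only [mul_zero, add_zero] at h
  exact h.congr fun v => by ring

lemma tendsto_F_bot {m : ℝ} (hm : 0 < m) (a b : ℝ) :
    Tendsto (fun v : ℝ => (a * v ^ 3 + b * v) * Real.exp (-m * v ^ 2)) atBot (𝓝 0) := by
  have h := (tendsto_F_top hm (-a) (-b)).comp tendsto_neg_atBot_atTop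
  exact h.congr fun v => by
    simp only [Function.comp_apply, neg_sq]
    ring_nf

lemma integrable_pow4_gauss {m : ℝ} (hm : 0 < m) :
    Integrable fun v : ℝ => v ^ 4 * Real.exp (-m * v ^ 2) := by
  have h := integrable_rpow_mul_exp_neg_mul_sq hm (s := 4) (by norm_num)
  have heq : (fun v : ℝ => v ^ (4 : ℝ) * Real.exp (-m * v ^ 2))
      = fun v : ℝ => v ^ (4 : ℕ) * Real.exp (-m * v ^ 2) := by
    funext v
    rw [show (4 : ℝ) = ((4 : ℕ) : ℝ) by norm_num, Real.rpow_natCast]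
  rwa [heq] at h

lemma integral_pow4_gauss {m : ℝ} (hm : 0 < m) :
    ∫ v : ℝ, v ^ 4 * Real.exp (-m * v ^ 2) = 3 / (4 * m ^ 2) * Real.sqrt (π / m) := by
  have hm' : m ≠ 0 := ne_of_gt hm
  have hderiv : ∀ v : ℝ, HasDerivAt
      (fun v : ℝ => (1/(2*m) * v ^ 3 + 3/(4*m^2) * v) * Real.exp (-m * v ^ 2))
      (3/(4*m^2) * Real.exp (-m * v ^ 2) - v ^ 4 * Real.exp (-m * v ^ 2)) v := by
    intro v
    have h := (((hasDerivAt_pow 3 v).const_mul (1/(2*m))).add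
        ((hasDerivAt_id v).const_mul (3/(4*m^2)))).mul
      (((hasDerivAt_pow 2 v).const_mul (-m)).exp)
    refine h.congr_deriv ?_
    simp only [Pi.add_apply, id]
    push_cast
    field_simp
    ring
  have hint : Integrable (fun v : ℝ =>
      3/(4*m^2) * Real.exp (-m * v ^ 2) - v ^ 4 * Real.exp (-m * v ^ 2)) :=
    ((integrable_exp_neg_mul_sq hm).const_mul _).sub (integrable_pow4_gauss hm)
  have h0 := integral_of_hasDerivAt_of_tendsto hderiv hint
    (tendsto_F_bot hm _ _) (tendsto_F_top hm _ _)
  rw [integral_sub ((integrable_exp_neg_mul_sq hm).const_mul _) (integrable_pow4_gauss hm),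
    integral_const_mul, integral_gaussian] at h0
  have : (0:ℝ) - 0 = 0 := by ring
  rw [this] at h0
  linarith

lemma kappa_lb {μ : ℝ} (hμ : 3 < μ) :
    Real.sqrt (π / (μ - 3/2)) * (1 - 3 / (4 * (μ - 3/2))) ≤ kappaConst μ := by
  set m := μ - 3/2 with hmdef
  have hm0 : 0 < m := by rw [hmdef]; linarith
  have hm1 : 1 ≤ m := by rw [hmdef]; linarith
  have hgint : Integrable (fun v : ℝ =>
      Real.exp (-m * v ^ 2) - m * (v ^ 4 * Real.exp (-m * v ^ 2))) :=
    (integrable_exp_neg_mul_sq hm0).sub ((integrable_pow4_gauss hm0).const_mul m)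
  have h1 : ∫ v in (-1:ℝ)..1,
      (Real.exp (-m * v ^ 2) - m * (v ^ 4 * Real.exp (-m * v ^ 2))) ≤ kappaConst μ := by
    unfold kappaConst
    apply intervalIntegral.integral_mono_on (by norm_num)
      (Continuous.intervalIntegrable (by fun_prop) _ _)
      ((rpow_base_cont hm0.le).intervalIntegrable _ _)
    intro v hv
    have hv2 : v ^ 2 ≤ 1 := by nlinarith [hv.1, hv.2]
    exact pw_lower hm1 hv2
  have h2 : (∫ v : ℝ, (Real.exp (-m * v ^ 2) - m * (v ^ 4 * Real.exp (-m * v ^ 2))))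
      ≤ ∫ v in (-1:ℝ)..1,
        (Real.exp (-m * v ^ 2) - m * (v ^ 4 * Real.exp (-m * v ^ 2))) := by
    rw [intervalIntegral.integral_of_le (by norm_num : (-1:ℝ) ≤ 1)]
    have hsplit := integral_add_compl (measurableSet_Ioc (a := (-1:ℝ)) (b := 1)) hgint
    have hcompl : ∫ v in (Ioc (-1:ℝ) 1)ᶜ,
        (Real.exp (-m * v ^ 2) - m * (v ^ 4 * Real.exp (-m * v ^ 2))) ≤ 0 := by
      apply setIntegral_nonpos measurableSet_Ioc.compl
      intro v hv
      have hv' : v ≤ -1 ∨ 1 < v := by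
        by_contra hcon
        push_neg at hcon
        exact hv ⟨by linarith [hcon.1], by linarith [hcon.2]⟩
      have hv2 : 1 ≤ v ^ 2 := by
        rcases hv' with h | h <;> nlinarith
      have hv4 : 1 ≤ v ^ 4 := by nlinarith
      have hmv4 : 1 ≤ m * v ^ 4 := by nlinarith
      nlinarith [(Real.exp_pos (-m * v ^ 2)).le]
    linarith
  have h3 : (∫ v : ℝ, (Real.exp (-m * v ^ 2) - m * (v ^ 4 * Real.exp (-m * v ^ 2))))
      = Real.sqrt (π / m) * (1 - 3 / (4 * m)) := by
    rw [integral_sub (integrable_exp_neg_mul_sq hm0) ((integrable_pow4_gauss hm0).const_mul m),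
      integral_const_mul, integral_pow4_gauss hm0, integral_gaussian]
    field_simp
  linarith [h3 ▸ h2]

lemma int_ub {μ x : ℝ} (hμ : 3 < μ) (hx : 0 ≤ x) :
    (∫ v in (-1:ℝ)..1,
        Real.exp (2 * v * (Real.sqrt (μ - 3 / 2) * x)) * (1 - v ^ 2) ^ (μ - 3 / 2))
      ≤ Real.sqrt (π / (μ - 3/2)) * Real.exp (x ^ 2) := by
  set m := μ - 3/2 with hmdef
  have hm0 : 0 < m := by rw [hmdef]; linarith
  set c := Real.sqrt m * x with hcdef
  have h1 : (∫ v in (-1:ℝ)..1, Real.exp (2 * v * c) * (1 - v ^ 2) ^ m)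
      ≤ ∫ v in (-1:ℝ)..1, Real.exp (2 * v * c - m * v ^ 2) := by
    apply intervalIntegral.integral_mono_on (by norm_num)
      (Continuous.intervalIntegrable
        (by exact (Real.continuous_exp.comp (by fun_prop)).mul (rpow_base_cont hm0.le)) _ _)
      (Continuous.intervalIntegrable (by fun_prop) _ _)
    intro v hv
    have hv2 : v ^ 2 ≤ 1 := by nlinarith [hv.1, hv.2]
    calc Real.exp (2 * v * c) * (1 - v ^ 2) ^ m
        ≤ Real.exp (2 * v * c) * Real.exp (-m * v ^ 2) :=
          mul_le_mul_of_nonneg_left (pw_upper hm0.le hv2) (Real.exp_pos _).le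
      _ = Real.exp (2 * v * c - m * v ^ 2) := by rw [← Real.exp_add]; congr 1; ring
  have h2 : (∫ v in (-1:ℝ)..1, Real.exp (2 * v * c - m * v ^ 2))
      ≤ ∫ v : ℝ, Real.exp (2 * v * c - m * v ^ 2) := by
    rw [intervalIntegral.integral_of_le (by norm_num : (-1:ℝ) ≤ 1)]
    exact setIntegral_le_integral (integrable_gauss_linear hm0 c)
      (ae_of_all _ fun v => (Real.exp_pos _).le)
  have h3 : (∫ v : ℝ, Real.exp (2 * v * c - m * v ^ 2))
      = Real.sqrt (π / m) * Real.exp (x ^ 2) := by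
    rw [integral_gauss_linear hm0 c]
    congr 1
    rw [hcdef, mul_pow, Real.sq_sqrt hm0.le]
    field_simp
  linarith
 
theorem stmt_19 :
    ∃ C > 0, ∀ μ : ℝ, 3 < μ → ∀ x : ℝ, 0 ≤ x →
      besselJNeg μ (Real.sqrt (μ - 3 / 2) * x) ≤ Real.exp (x ^ 2) * (1 + C / μ) := by
  refine ⟨3, by norm_num, fun μ hμ x hx => ?_⟩
  have hm0 : (0:ℝ) < μ - 3/2 := by linarith
  have hμ0 : (0:ℝ) < μ := by linarith
  have hsq : 0 < Real.sqrt (π / (μ - 3/2)) := Real.sqrt_pos.2 (div_pos Real.pi_pos hm0)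
  have hfac : (0:ℝ) < 1 - 3 / (4 * (μ - 3/2)) := by
    have h : (3:ℝ) / (4 * (μ - 3/2)) < 1 := (div_lt_one (by linarith)).2 (by linarith)
    linarith
  have hκ := kappa_lb hμ
  have hκ0 : 0 < kappaConst μ := lt_of_lt_of_le (by positivity) hκ
  have hI := int_ub hμ hx
  have harith : (1:ℝ) ≤ (1 - 3 / (4 * (μ - 3/2))) * (1 + 3 / μ) := by
    have hne2 : μ ≠ 0 := ne_of_gt hμ0
    have hne3 : (μ*2-3) ≠ 0 := by intro h; nlinarith
    have hne4 : (2*μ-3) ≠ 0 := by intro h; nlinarith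
    have hd1 : (0:ℝ) < μ*2-3 := by linarith
    rw [← sub_nonneg]
    field_simp
    nlinarith
  have key : Real.sqrt (π / (μ - 3/2)) ≤ kappaConst μ * (1 + 3 / μ) := by
    calc Real.sqrt (π / (μ - 3/2)) = Real.sqrt (π / (μ - 3/2)) * 1 := (mul_one _).symm
      _ ≤ Real.sqrt (π / (μ - 3/2)) * ((1 - 3 / (4 * (μ - 3/2))) * (1 + 3 / μ)) :=
          mul_le_mul_of_nonneg_left harith hsq.le
      _ = (Real.sqrt (π / (μ - 3/2)) * (1 - 3 / (4 * (μ - 3/2)))) * (1 + 3 / μ) := by ring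
      _ ≤ kappaConst μ * (1 + 3 / μ) :=
          mul_le_mul_of_nonneg_right hκ (by positivity)
  unfold besselJNeg
  calc (1 / kappaConst μ) * ∫ v in (-1:ℝ)..1,
        Real.exp (2 * v * (Real.sqrt (μ - 3 / 2) * x)) * (1 - v ^ 2) ^ (μ - 3 / 2)
      ≤ (1 / kappaConst μ) * (Real.sqrt (π / (μ - 3/2)) * Real.exp (x ^ 2)) :=
        mul_le_mul_of_nonneg_left hI (by positivity)
    _ ≤ Real.exp (x ^ 2) * (1 + 3 / μ) := by
        rw [one_div, inv_mul_le_iff₀ hκ0]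
        nlinarith [key, (Real.exp_pos (x ^ 2)).le, Real.exp_pos (x ^ 2)]
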